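/- A proper Gromov hyperbolic geodesic metric space X has a quasi-pole (in some compact subset Ω ⊆ X) if and only if X has a pole (at some point v ∈ X). -/
import Mathlib


namespace TreePaper

variable {X : Type*}

/-- The Gromov product `(x|y)_o = ½(d(x,o) + d(y,o) - d(x,y))`. -/
noncomputable def gromovProd [MetricSpace X] (o x y : X) : ℝ :=
  (dist x o + dist y o - dist x y) / 2

/-- `X` is Gromov hyperbolic. -/
def GromovHyperbolic (X : Type*) [MetricSpace X] : Prop :=
  ∃ δ : ℝ, 0 ≤ δ ∧ ∀ o x y z : X,
    min (gromovProd o x z) (gromovProd o z y) - δ ≤ gromovProd o x y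

/-- A geodesic ray emanating from `v`. -/
def IsGeodRay [MetricSpace X] (v : X) (γ : ℝ → X) : Prop :=
  γ 0 = v ∧ ∀ s t : ℝ, 0 ≤ s → 0 ≤ t → dist (γ s) (γ t) = |s - t|

/-- `X` has a pole at `v`. -/
def HasPoleAt [MetricSpace X] (v : X) : Prop :=
  ∃ M : ℝ, 0 < M ∧ ∀ x : X, ∃ γ : ℝ → X, IsGeodRay v γ ∧
    ∃ t : ℝ, 0 ≤ t ∧ dist x (γ t) ≤ M

/-- `X` has a quasi-pole in the compact set `Ω`: there is `C > 0` such that each point of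
`X` lies in the `C`-neighborhood of some geodesic ray emanating from a point of `Ω`. -/
def HasQuasiPoleIn [MetricSpace X] (Ω : Set X) : Prop :=
  ∃ C : ℝ, 0 < C ∧ ∀ x : X, ∃ γ : ℝ → X, γ 0 ∈ Ω ∧ IsGeodRay (γ 0) γ ∧
    ∃ t : ℝ, 0 ≤ t ∧ dist x (γ t) ≤ C

/-- `X` is a geodesic metric space. -/
def GeodesicSpace (X : Type*) [MetricSpace X] : Prop :=
  ∀ x y : X, ∃ γ : ℝ → X, γ 0 = x ∧ γ (dist x y) = y ∧
    ∀ s t : ℝ, s ∈ Set.Icc 0 (dist x y) → t ∈ Set.Icc 0 (dist x y) →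
      dist (γ s) (γ t) = |s - t|

lemma near_geodesic [MetricSpace X] {δ : ℝ}
    (hyp : ∀ o x y z : X, min (gromovProd o x z) (gromovProd o z y) - δ ≤ gromovProd o x y)
    (σ : ℝ → X) (L : ℝ) (hL : 0 ≤ L)
    (hσ : ∀ s t : ℝ, s ∈ Set.Icc 0 L → t ∈ Set.Icc 0 L → dist (σ s) (σ t) = |s - t|)
    (p : X) :
    ∃ t ∈ Set.Icc (0:ℝ) L, dist p (σ t) ≤ gromovProd p (σ 0) (σ L) + 2 * δ := by
  have h0m : (0:ℝ) ∈ Set.Icc (0:ℝ) L := ⟨le_refl _, hL⟩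
  have hLm : L ∈ Set.Icc (0:ℝ) L := ⟨hL, le_refl _⟩
  have hab : dist (σ 0) (σ L) = L := by
    rw [hσ 0 L h0m hLm, abs_of_nonpos (by linarith)]; ring
  set t := (L + dist (σ 0) p - dist (σ L) p) / 2 with htdef
  have htri1 : dist (σ L) p ≤ L + dist (σ 0) p := by
    calc dist (σ L) p ≤ dist (σ L) (σ 0) + dist (σ 0) p := dist_triangle _ _ _
    _ = L + dist (σ 0) p := by rw [dist_comm (σ L) (σ 0), hab]
  have htri2 : dist (σ 0) p ≤ L + dist (σ L) p := by
    calc dist (σ 0) p ≤ dist (σ 0) (σ L) + dist (σ L) p := dist_triangle _ _ _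
    _ = L + dist (σ L) p := by rw [hab]
  have htm : t ∈ Set.Icc (0:ℝ) L := ⟨by rw [htdef]; linarith, by rw [htdef]; linarith⟩
  have haq : dist (σ 0) (σ t) = t := by
    rw [hσ 0 t h0m htm, abs_of_nonpos (by linarith [htm.1])]; ring
  have hqb : dist (σ t) (σ L) = L - t := by
    rw [hσ t L htm hLm, abs_of_nonpos (by linarith [htm.2])]; ring
  refine ⟨t, htm, ?_⟩
  have h1 := hyp p (σ 0) (σ L) (σ t)
  have e1 : gromovProd p (σ 0) (σ t) = gromovProd p (σ t) (σ L) := by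
    simp only [gromovProd, haq, hqb]
    rw [htdef]; ring
  have hmin : min (gromovProd p (σ 0) (σ t)) (gromovProd p (σ t) (σ L))
      = gromovProd p (σ 0) (σ t) := by rw [e1, min_self]
  rw [hmin] at h1
  have hsum : gromovProd p (σ 0) (σ t) + gromovProd p (σ t) (σ L)
      = dist p (σ t) + gromovProd p (σ 0) (σ L) := by
    simp only [gromovProd, haq, hqb, hab, dist_comm p (σ t)]
    ring
  linarith [h1, hsum, e1]

/-- A proper Gromov hyperbolic geodesic metric space has a quasi-pole
(in some compact subset) iff it has a pole (at some point). -/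
theorem quasiPole_iff_pole [MetricSpace X] [ProperSpace X] [Nonempty X]
    (hXh : GromovHyperbolic X) (hXg : GeodesicSpace X) :
    (∃ Ω : Set X, IsCompact Ω ∧ HasQuasiPoleIn Ω) ↔ ∃ v : X, HasPoleAt v := by
  constructor
  · rintro ⟨Ω, hΩc, C, hC, hQ⟩
    obtain ⟨δ, hδ0, hyp⟩ := hXh
    obtain ⟨x0⟩ := (inferInstance : Nonempty X)
    obtain ⟨γ0, hγ0Ω, -, -⟩ := hQ x0
    set v := γ0 0 with hv
    obtain ⟨r, hr⟩ := hΩc.isBounded.subset_closedBall v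
    set D := max r 0 with hD
    have hD0 : (0:ℝ) ≤ D := le_max_right _ _
    have hΩD : ∀ w ∈ Ω, dist v w ≤ D := by
      intro w hw
      have h := hr hw
      rw [Metric.mem_closedBall] at h
      calc dist v w = dist w v := dist_comm _ _
      _ ≤ r := h
      _ ≤ D := le_max_left _ _
    set K := max (2*D + 2*δ) (3*δ) with hK
    have hK0 : (0:ℝ) ≤ K := le_trans (by linarith) (le_max_left _ _)
    refine ⟨v, C + 2*K + 1, by linarith, fun x => ?_⟩
    obtain ⟨γ, hγΩ, ⟨-, hγgeo⟩, t₀, ht₀, hxC⟩ := hQ x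
    set w := γ 0 with hwdef
    set p := γ t₀ with hpdef
    have hvwD : dist v w ≤ D := hΩD w hγΩ
    have hwp : dist w p = t₀ := by
      rw [hwdef, hpdef, hγgeo 0 t₀ le_rfl ht₀, abs_of_nonpos (by linarith)]; ring
    -- geodesics from v to γ(n)
    choose g hg0 hgend hgG using fun n : ℕ => hXg v (γ (n:ℝ))
    set L : ℕ → ℝ := fun n => dist v (γ (n:ℝ)) with hLdef
    have hL0 : ∀ n, (0:ℝ) ≤ L n := fun n => dist_nonneg
    have hLlarge : ∀ n : ℕ, (n:ℝ) - D ≤ L n := by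
      intro n
      have hwn : dist w (γ (n:ℝ)) = n := by
        rw [hwdef, hγgeo 0 n le_rfl (Nat.cast_nonneg n), abs_of_nonpos (by linarith [(Nat.cast_nonneg n : (0:ℝ) ≤ n)])]
        ring
      have := dist_triangle w v (γ (n:ℝ))
      rw [hwn] at this
      have hwv : dist w v ≤ D := by rw [dist_comm]; exact hvwD
      simp only [hLdef]
      linarith
    -- the clamped geodesic segments
    set c : ℝ → ℕ → ℝ := fun s n => max 0 (min s (L n)) with hcdef
    have hcm : ∀ s n, c s n ∈ Set.Icc (0:ℝ) (L n) := by
      intro s n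
      exact ⟨le_max_left _ _, max_le (hL0 n) (min_le_right _ _)⟩
    have hceq : ∀ s : ℝ, 0 ≤ s → ∀ n, s ≤ L n → c s n = s := by
      intro s hs n hsn
      simp only [hcdef]
      rw [min_eq_left hsn, max_eq_right hs]
    set F : ℝ → ℕ → X := fun s n => g n (c s n) with hFdef
    have hvF : ∀ s n, dist v (F s n) = c s n := by
      intro s n
      have := hgG n 0 (c s n) ⟨le_refl _, hL0 n⟩ (hcm s n)
      rw [← hg0 n]
      simp only [hFdef]
      rw [this, abs_of_nonpos (by linarith [(hcm s n).1])]; ring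
    set s₀ := dist v p with hs₀def
    have hs₀0 : (0:ℝ) ≤ s₀ := dist_nonneg
    have hs₀D : s₀ ≤ D + t₀ := by
      have := dist_triangle v w p
      rw [hwp] at this
      simp only [hs₀def]; linarith
    -- the key uniform estimate
    have hkey : ∀ n : ℕ, t₀ + 2*D ≤ (n:ℝ) → dist p (F s₀ n) ≤ 2*K := by
      intro n hn
      have hnt₀ : t₀ ≤ (n:ℝ) := by linarith
      have hs₀L : s₀ ≤ L n := by
        have := hLlarge n
        linarith [hs₀D]
      have hFs : F s₀ n = g n s₀ := by
        simp only [hFdef]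
        rw [hceq s₀ hs₀0 n hs₀L]
      have hwn : dist w (γ (n:ℝ)) = n := by
        rw [hwdef, hγgeo 0 n le_rfl (Nat.cast_nonneg n), abs_of_nonpos (by linarith [(Nat.cast_nonneg n : (0:ℝ) ≤ n)])]
        ring
      have hnp : dist (γ (n:ℝ)) p = (n:ℝ) - t₀ := by
        rw [hpdef, hγgeo n t₀ (Nat.cast_nonneg n) ht₀, abs_of_nonneg (by linarith)]
      have h1 := hyp p w (γ (n:ℝ)) v
      have hG0 : gromovProd p w (γ (n:ℝ)) = 0 := by
        simp only [gromovProd, hwp, hnp, hwn]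
        ring
      rw [hG0] at h1
      rcases le_total (gromovProd p w v) (gromovProd p v (γ (n:ℝ))) with hle | hle
      · -- case (w|v)_p ≤ δ : p is close to v
        rw [min_eq_left hle] at h1
        have hwvp : (dist w p + dist v p - dist w v) / 2 ≤ δ := by
          have : gromovProd p w v ≤ δ := by linarith
          simpa [gromovProd] using this
        have hwv : dist w v ≤ D := by rw [dist_comm]; exact hvwD
        have hs₀small : s₀ ≤ D + 2*δ := by
          rw [hs₀def, dist_comm v p]
          rw [hwp] at hwvp
          have : dist v p = dist p v := dist_comm _ _
          linarith [ht₀, this ▸ hwvp]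
        have hs₀K : s₀ ≤ K := by
          have : D + 2*δ ≤ 2*D + 2*δ := by linarith
          calc s₀ ≤ D + 2*δ := hs₀small
          _ ≤ 2*D + 2*δ := this
          _ ≤ K := le_max_left _ _
        calc dist p (F s₀ n) ≤ dist p v + dist v (F s₀ n) := dist_triangle _ _ _
        _ = s₀ + c s₀ n := by rw [dist_comm p v, ← hs₀def, hvF]
        _ = s₀ + s₀ := by rw [hceq s₀ hs₀0 n hs₀L]
        _ ≤ 2*K := by linarith
      · -- case (v|γn)_p ≤ δ : p is close to the geodesic [v, γ n]
        rw [min_eq_right hle] at h1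
        have hvγ : gromovProd p v (γ (n:ℝ)) ≤ δ := by linarith
        obtain ⟨t, htm, htb⟩ := near_geodesic hyp (g n) (L n) (hL0 n) (hgG n) p
        rw [hg0 n] at htb
        have hgLn : g n (L n) = γ (n:ℝ) := hgend n
        rw [hgLn] at htb
        have htK : dist p (g n t) ≤ K := by
          have h3 : (3:ℝ)*δ ≤ K := le_max_right _ _
          linarith
        have hvt : dist v (g n t) = t := by
          have := hgG n 0 t ⟨le_refl _, hL0 n⟩ htm
          rw [← hg0 n, this, abs_of_nonpos (by linarith [htm.1])]; ring
        have hts : |t - s₀| ≤ K := by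
          have habs := abs_dist_sub_le (g n t) p v
          rw [dist_comm (g n t) v, hvt, dist_comm p v, ← hs₀def] at habs
          rw [dist_comm (g n t) p] at habs
          exact le_trans habs htK
        have hdist : dist (g n t) (g n s₀) = |t - s₀| :=
          hgG n t s₀ htm ⟨hs₀0, hs₀L⟩
        calc dist p (F s₀ n) = dist p (g n s₀) := by rw [hFs]
        _ ≤ dist p (g n t) + dist (g n t) (g n s₀) := dist_triangle _ _ _
        _ = dist p (g n t) + |t - s₀| := by rw [hdist]
        _ ≤ K + K := add_le_add htK hts
        _ = 2*K := by ring
    -- ultrafilter limit of the segments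
    obtain ⟨U, hU⟩ : ∃ U : Ultrafilter ℕ, (U : Filter ℕ) ≤ Filter.atTop :=
      ⟨Ultrafilter.of Filter.atTop, Ultrafilter.of_le _⟩
    have hlim : ∀ s : ℝ, ∃ y : X, Filter.Tendsto (fun n => F s n) U (nhds y) := by
      intro s
      have hc : IsCompact (Metric.closedBall v (max 0 s)) := isCompact_closedBall _ _
      have hmem : ∀ n, F s n ∈ Metric.closedBall v (max 0 s) := by
        intro n
        rw [Metric.mem_closedBall, dist_comm, hvF]
        simp only [hcdef]
        exact max_le_max (le_refl 0) (min_le_left _ _)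
      have hle : (U.map (fun n => F s n) : Filter X)
          ≤ Filter.principal (Metric.closedBall v (max 0 s)) := by
        rw [Filter.le_principal_iff]
        exact Filter.mem_map.mpr (Filter.univ_mem' hmem)
      obtain ⟨y, -, hy⟩ := hc.ultrafilter_le_nhds (U.map (fun n => F s n)) hle
      exact ⟨y, by rwa [Ultrafilter.coe_map] at hy⟩
    choose σ hσlim using hlim
    have hσ0 : σ 0 = v := by
      have hconst : ∀ n, F 0 n = v := by
        intro n
        simp only [hFdef, hcdef]
        rw [min_eq_left (hL0 n), max_self]
        exact hg0 n
      have h2 : Filter.Tendsto (fun n => F 0 n) U (nhds v) := by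
        rw [show (fun n => F 0 n) = fun _ : ℕ => v from funext hconst]
        exact tendsto_const_nhds
      exact tendsto_nhds_unique (hσlim 0) h2
    have hσgeo : ∀ s t : ℝ, 0 ≤ s → 0 ≤ t → dist (σ s) (σ t) = |s - t| := by
      intro s t hs ht
      have hev : ∀ᶠ n in (U : Filter ℕ), dist (F s n) (F t n) = |s - t| := by
        apply hU
        have h1 : ∀ᶠ n : ℕ in Filter.atTop, max s t + D ≤ (n:ℝ) :=
          tendsto_natCast_atTop_atTop.eventually_ge_atTop (max s t + D)
        filter_upwards [h1] with n hn
        have hsL : s ≤ L n := by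
          have := hLlarge n
          have := le_max_left s t
          linarith
        have htL : t ≤ L n := by
          have := hLlarge n
          have := le_max_right s t
          linarith
        simp only [hFdef]
        rw [hceq s hs n hsL, hceq t ht n htL]
        exact hgG n s t ⟨hs, hsL⟩ ⟨ht, htL⟩
      have h2 : Filter.Tendsto (fun n => dist (F s n) (F t n)) U (nhds (dist (σ s) (σ t))) :=
        Filter.Tendsto.dist (hσlim s) (hσlim t)
      have h3 : Filter.Tendsto (fun n => dist (F s n) (F t n)) U (nhds (|s - t|)) :=
        Filter.Tendsto.congr' (Filter.EventuallyEq.symm hev) tendsto_const_nhds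
      exact tendsto_nhds_unique h2 h3
    have hfinal : dist x (σ s₀) ≤ C + 2*K := by
      have hev : ∀ᶠ n in (U : Filter ℕ), dist x (F s₀ n) ≤ C + 2*K := by
        apply hU
        have h1 : ∀ᶠ n : ℕ in Filter.atTop, t₀ + 2*D ≤ (n:ℝ) :=
          tendsto_natCast_atTop_atTop.eventually_ge_atTop (t₀ + 2*D)
        filter_upwards [h1] with n hn
        calc dist x (F s₀ n) ≤ dist x p + dist p (F s₀ n) := dist_triangle _ _ _
        _ ≤ C + 2*K := add_le_add hxC (hkey n hn)
      have h2 : Filter.Tendsto (fun n => dist x (F s₀ n)) U (nhds (dist x (σ s₀))) :=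
        Filter.Tendsto.dist tendsto_const_nhds (hσlim s₀)
      exact le_of_tendsto h2 hev
    exact ⟨σ, ⟨hσ0, hσgeo⟩, s₀, hs₀0, by linarith⟩
  · rintro ⟨v, M, hM, hP⟩
    refine ⟨{v}, isCompact_singleton, M, hM, fun x => ?_⟩
    obtain ⟨γ, ⟨hγ0, hγg⟩, t, ht, hd⟩ := hP x
    exact ⟨γ, by simp [hγ0], ⟨rfl, hγg⟩, t, ht, hd⟩

end TreePaper
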